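/- arXiv:1112.3837 — 4 statements merged into one kernel-verified Lean document; each statement's English description precedes it below -/
import Mathlib

section
/- For every set X and all φ, ψ : X → Σ, the pointwise conjunction χ defined by χ(x) = φ(x) ∧ ψ(x) is a binary meet of φ and ψ in the preorder (X → Σ, ≤): χ ≤ φ, χ ≤ ψ, and every ρ : X → Σ with ρ ≤ φ and ρ ≤ ψ satisfies ρ ≤ χ. -/
open CategoryTheory Encodable Denumerable

namespace Herbrand

/-- Kleene application in Kleene's first pca `K₁`: `e · n`. -/
def kap (e n : ℕ) : Part ℕ := Nat.Partrec.Code.eval (ofNat Nat.Partrec.Code e) n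

/-- `kapIn r n S` : `r · n` is defined and its value lies in `S`. -/
def kapIn (r n : ℕ) (S : Set ℕ) : Prop := ∃ v ∈ kap r n, v ∈ S

/-- The list coded by a natural number (canonical bijection `ℕ ≃ List ℕ`). -/
def toL (n : ℕ) : List ℕ := ofNat (List ℕ) n

/-- The code of a list of natural numbers. -/
def ofL (l : List ℕ) : ℕ := encode l

@[simp] lemma toL_ofL (l : List ℕ) : toL (ofL l) = l := ofNat_encode l

/-- `!A` : the set of codes of lists all of whose entries lie in `A`. -/
def bang (A : Set ℕ) : Set ℕ := {n | ∀ x ∈ toL n, x ∈ A}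

/-- `m ⪯ n` : every entry of the list coded by `m` is an entry of the list coded by `n`. -/
def sle (m n : ℕ) : Prop := ∀ x ∈ toL m, x ∈ toL n

lemma sle_refl (m : ℕ) : sle m m := fun _ hx => hx

lemma sle_trans {m n k : ℕ} (h1 : sle m n) (h2 : sle n k) : sle m k :=
  fun x hx => h2 x (h1 x hx)

/-- `S` is upward closed in `!A`. -/
def UpwardClosedIn (A S : Set ℕ) : Prop :=
  ∀ m ∈ S, ∀ n ∈ bang A, sle m n → n ∈ S

/-- `↑_{!A} S` : the set of `n ∈ !A` with `m ⪯ n` for some `m ∈ S`. -/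
def upClo (A S : Set ℕ) : Set ℕ := {n | n ∈ bang A ∧ ∃ m ∈ S, sle m n}

lemma mem_bang_univ (n : ℕ) : n ∈ bang Set.univ := fun x _ => Set.mem_univ x

/-- From a partial recursive function we get a `K₁`-code for it. -/
theorem exists_kap_eq {f : ℕ →. ℕ} (hf : Nat.Partrec f) : ∃ e, ∀ n, kap e n = f n := by
  obtain ⟨c, hc⟩ := Nat.Partrec.Code.exists_code.mp hf
  exact ⟨encode c, fun n => by simp [kap, hc]⟩


/-- A pair of sets of numbers: candidate Herbrand truth value `(X₀, X₁)`. -/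
structure HPair where
  act : Set ℕ
  pot : Set ℕ

/-- `X` is a Herbrand truth value (an element of `Σ`): `X₀ ⊆ !X₁` and
`X₀` is upward closed in `!X₁`. -/
def HPair.IsSigma (X : HPair) : Prop :=
  X.act ⊆ bang X.pot ∧ UpwardClosedIn X.pot X.act

/-- The preorder on `X → Σ` of the Herbrand tripos. -/
def hle {X : Type} (φ ψ : X → HPair) : Prop :=
  ∃ r : ℕ, ∀ x : X, ∀ n : ℕ,
    (n ∈ bang (φ x).pot → kapIn r n (bang (ψ x).pot)) ∧
    (n ∈ (φ x).act → kapIn r n (ψ x).act)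

/-- `A & B = {Nat.pair 0 a : a ∈ A} ∪ {Nat.pair 1 b : b ∈ B}`. -/
def amp (A B : Set ℕ) : Set ℕ :=
  (fun a => Nat.pair 0 a) '' A ∪ (fun b => Nat.pair 1 b) '' B

/-- `m_A`: the code of the list of all `a` with `Nat.pair 0 a` an entry of the list coded
by `m`. -/
def projL (m : ℕ) : ℕ :=
  ofL ((toL m).filterMap fun p => if p.unpair.1 = 0 then some p.unpair.2 else none)

/-- `m_B`: the code of the list of all `b` with `Nat.pair 1 b` an entry of the list coded
by `m`. -/
def projR (m : ℕ) : ℕ :=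
  ofL ((toL m).filterMap fun p => if p.unpair.1 = 1 then some p.unpair.2 else none)

/-- Conjunction of Herbrand truth values. -/
def conj (A B : HPair) : HPair where
  act := {m | m ∈ bang (amp A.pot B.pot) ∧ projL m ∈ A.act ∧ projR m ∈ B.act}
  pot := amp A.pot B.pot

/-- Disjunction of Herbrand truth values. -/
def disj (A B : HPair) : HPair where
  act := {m | m ∈ bang (amp A.pot B.pot) ∧ (projL m ∈ A.act ∨ projR m ∈ B.act)}
  pot := amp A.pot B.pot

/-- The potential realizers of an implication. -/
def implPot (A B : HPair) : Set ℕ := {c | ∀ m ∈ bang A.pot, kapIn c m (bang B.pot)}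

/-- Implication of Herbrand truth values. -/
def impl (A B : HPair) : HPair where
  act := upClo (implPot A B)
    {n | ∃ c, n = ofL [c] ∧ c ∈ implPot A B ∧ ∀ m ∈ A.act, kapIn c m B.act}
  pot := implPot A B

/-- The bottom Herbrand truth value `(∅, ∅)`. -/
def bot : HPair := ⟨∅, ∅⟩

/-- Negation of Herbrand truth values: `¬A = A → (∅, ∅)`. -/
def neg (A : HPair) : HPair := impl A bot


lemma ofL_toL (n : ℕ) : ofL (toL n) = n := Denumerable.encode_ofNat n

lemma kap_partrec (e : ℕ) : Partrec (kap e) :=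
  Nat.Partrec.Code.eval_part.comp (Computable.const _) Computable.id

lemma projL_primrec : Primrec projL :=
  Primrec.encode.comp <| Primrec.listFilterMap (Primrec.ofNat _) <|
    (Primrec.ite (Primrec.eq.comp (Primrec.fst.comp (Primrec.unpair.comp .snd)) (.const 0))
      (Primrec.option_some.comp (Primrec.snd.comp (Primrec.unpair.comp .snd))) (.const none))

lemma projR_primrec : Primrec projR :=
  Primrec.encode.comp <| Primrec.listFilterMap (Primrec.ofNat _) <|
    (Primrec.ite (Primrec.eq.comp (Primrec.fst.comp (Primrec.unpair.comp .snd)) (.const 1))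
      (Primrec.option_some.comp (Primrec.snd.comp (Primrec.unpair.comp .snd))) (.const none))

lemma projL_mem_bang {A B : Set ℕ} {m : ℕ} (h : m ∈ bang (amp A B)) : projL m ∈ bang A := by
  intro x hx
  rw [projL, toL_ofL] at hx
  obtain ⟨p, hp, hpx⟩ := List.mem_filterMap.1 hx
  rcases h p hp with ⟨a, ha, rfl⟩ | ⟨b, hb, rfl⟩
  · simp only [Nat.unpair_pair, if_true, reduceIte, Option.some.injEq] at hpx
    exact hpx ▸ ha
  · simp [Nat.unpair_pair] at hpx

lemma projR_mem_bang {A B : Set ℕ} {m : ℕ} (h : m ∈ bang (amp A B)) : projR m ∈ bang B := by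
  intro x hx
  rw [projR, toL_ofL] at hx
  obtain ⟨p, hp, hpx⟩ := List.mem_filterMap.1 hx
  rcases h p hp with ⟨a, ha, rfl⟩ | ⟨b, hb, rfl⟩
  · simp [Nat.unpair_pair] at hpx
  · simp only [Nat.unpair_pair, if_true, reduceIte, Option.some.injEq] at hpx
    exact hpx ▸ hb

/-- Pairing of realizer lists: `⟨(0,a₁),…,(0,aₖ),(1,b₁),…,(1,bₗ)⟩`. -/
def glue (a b : ℕ) : ℕ :=
  ofL (((toL a).map (Nat.pair 0)) ++ ((toL b).map (Nat.pair 1)))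

lemma glue_primrec : Primrec₂ glue :=
  Primrec.encode.comp <| Primrec.list_append.comp
    (Primrec.list_map ((Primrec.ofNat _).comp .fst)
      (Primrec₂.natPair.comp (Primrec.const 0) Primrec.snd))
    (Primrec.list_map ((Primrec.ofNat _).comp .snd)
      (Primrec₂.natPair.comp (Primrec.const 1) Primrec.snd))

lemma filterMap_none' {α β : Type} (l : List α) :
    l.filterMap (fun _ => (none : Option β)) = [] := by
  induction l <;> simp [List.filterMap_cons, *]

lemma projL_glue (a b : ℕ) : projL (glue a b) = a := by
  rw [projL, glue, toL_ofL, List.filterMap_append, List.filterMap_map, List.filterMap_map]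
  have h1 : ∀ x : ℕ,
      ((fun p : ℕ => if p.unpair.1 = 0 then some p.unpair.2 else none) ∘ Nat.pair 0) x
        = some x := fun x => by simp [Nat.unpair_pair]
  have h2 : ∀ x : ℕ,
      ((fun p : ℕ => if p.unpair.1 = 0 then some p.unpair.2 else none) ∘ Nat.pair 1) x
        = none := fun x => by simp [Nat.unpair_pair]
  simp only [List.filterMap_congr (fun x _ => h1 x), List.filterMap_congr (fun x _ => h2 x),
    List.filterMap_some, filterMap_none', List.append_nil, ofL_toL]

lemma projR_glue (a b : ℕ) : projR (glue a b) = b := by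
  rw [projR, glue, toL_ofL, List.filterMap_append, List.filterMap_map, List.filterMap_map]
  have h1 : ∀ x : ℕ,
      ((fun p : ℕ => if p.unpair.1 = 1 then some p.unpair.2 else none) ∘ Nat.pair 0) x
        = none := fun x => by simp [Nat.unpair_pair]
  have h2 : ∀ x : ℕ,
      ((fun p : ℕ => if p.unpair.1 = 1 then some p.unpair.2 else none) ∘ Nat.pair 1) x
        = some x := fun x => by simp [Nat.unpair_pair]
  simp only [List.filterMap_congr (fun x _ => h1 x), List.filterMap_congr (fun x _ => h2 x),
    List.filterMap_some, filterMap_none', List.nil_append, ofL_toL]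

lemma glue_mem_bang {A B : Set ℕ} {a b : ℕ} (ha : a ∈ bang A) (hb : b ∈ bang B) :
    glue a b ∈ bang (amp A B) := by
  intro x hx
  rw [glue, toL_ofL, List.mem_append] at hx
  rcases hx with hx | hx
  · obtain ⟨y, hy, rfl⟩ := List.mem_map.1 hx
    exact Or.inl ⟨y, ha y hy, rfl⟩
  · obtain ⟨y, hy, rfl⟩ := List.mem_map.1 hx
    exact Or.inr ⟨y, hb y hy, rfl⟩

/-- pointwise conjunction is a binary meet in the preorder `(X → Σ, ≤)`. -/
theorem conj_is_binary_meet {X : Type} (φ ψ : X → HPair)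
    (hφ : ∀ x, (φ x).IsSigma) (hψ : ∀ x, (ψ x).IsSigma) :
    hle (fun x => conj (φ x) (ψ x)) φ ∧
    hle (fun x => conj (φ x) (ψ x)) ψ ∧
    ∀ ρ : X → HPair, (∀ x, (ρ x).IsSigma) →
      hle ρ φ → hle ρ ψ → hle ρ (fun x => conj (φ x) (ψ x)) := by
  obtain ⟨eL, heL⟩ := exists_kap_eq (Partrec.nat_iff.1 projL_primrec.to_comp.partrec)
  obtain ⟨eR, heR⟩ := exists_kap_eq (Partrec.nat_iff.1 projR_primrec.to_comp.partrec)
  refine ⟨⟨eL, fun x n => ?_⟩, ⟨eR, fun x n => ?_⟩, ?_⟩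
  · constructor
    · intro hn
      exact ⟨projL n, by rw [heL]; exact Part.mem_some _, projL_mem_bang hn⟩
    · intro hn
      exact ⟨projL n, by rw [heL]; exact Part.mem_some _, hn.2.1⟩
  · constructor
    · intro hn
      exact ⟨projR n, by rw [heR]; exact Part.mem_some _, projR_mem_bang hn⟩
    · intro hn
      exact ⟨projR n, by rw [heR]; exact Part.mem_some _, hn.2.2⟩
  · rintro ρ hρ ⟨r₁, hr₁⟩ ⟨r₂, hr₂⟩
    have hfp : Partrec fun n => (kap r₁ n).bind fun a => (kap r₂ n).map fun b => glue a b := by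
      refine (kap_partrec r₁).bind ?_
      exact ((kap_partrec r₂).comp Computable.fst).map
        ((glue_primrec.to_comp.comp (Computable.snd.comp Computable.fst) Computable.snd).to₂)
    obtain ⟨e, he⟩ := exists_kap_eq (Partrec.nat_iff.1 hfp)
    refine ⟨e, fun x n => ?_⟩
    constructor
    · intro hn
      obtain ⟨a, ha, haP⟩ := (hr₁ x n).1 hn
      obtain ⟨b, hb, hbP⟩ := (hr₂ x n).1 hn
      refine ⟨glue a b, ?_, glue_mem_bang haP hbP⟩
      rw [he]
      exact Part.mem_bind ha (Part.mem_map _ hb)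
    · intro hn
      have hnP : n ∈ bang (ρ x).pot := (hρ x).1 hn
      obtain ⟨a, ha, haA⟩ := (hr₁ x n).2 hn
      obtain ⟨b, hb, hbA⟩ := (hr₂ x n).2 hn
      refine ⟨glue a b, ?_, ?_⟩
      · rw [he]
        exact Part.mem_bind ha (Part.mem_map _ hb)
      · exact ⟨glue_mem_bang ((hφ x).1 haA) ((hψ x).1 hbA),
          by rw [projL_glue]; exact haA, by rw [projR_glue]; exact hbA⟩

end Herbrand
end

section
/- Let f : X → Y be a function between sets and φ : X → Σ. Define ∀_f φ : Y → Σ by (∀_f φ y)₁ = { a ∈ ℕ : for all x ∈ f⁻¹(y) and all b ∈ ℕ, a · b is defined and a · b ∈ !(φ x)₁ } and (∀_f φ y)₀ = ↑_{!(∀_f φ y)₁} { ⟨a⟩ : a ∈ (∀_f φ y)₁ and for all x ∈ f⁻¹(y) and all b ∈ ℕ, a · b ∈ (φ x)₀ }. Then ∀_f φ y is an element of Σ for every y ∈ Y, and for every χ : Y → Σ one has χ ∘ f ≤ φ if and only if χ ≤ ∀_f φ. -/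
open CategoryTheory Encodable Denumerable

namespace Herbrand

/-- The potential realizers of `∀_f φ y`. -/
def hforallPot {X Y : Type} (f : X → Y) (φ : X → HPair) (y : Y) : Set ℕ :=
  {a | ∀ x, f x = y → ∀ b : ℕ, kapIn a b (bang (φ x).pot)}

/-- The universal quantifier `∀_f φ` along `f : X → Y`. -/
def hforall {X Y : Type} (f : X → Y) (φ : X → HPair) (y : Y) : HPair where
  act := upClo (hforallPot f φ y)
    {m | ∃ a, m = ofL [a] ∧ a ∈ hforallPot f φ y ∧
      ∀ x, f x = y → ∀ b : ℕ, kapIn a b ((φ x).act)}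
  pot := hforallPot f φ y

open Nat.Partrec (Code)

section Kleene

lemma partrec₂_kap : Partrec₂ kap :=
  Code.eval_part.comp ((Computable.ofNat _).comp Computable.fst) Computable.snd

lemma exists_kap_eq_bind (s t : ℕ) : ∃ e, ∀ n, kap e n = (kap s n).bind (kap t) := by
  have h : Partrec fun n => (kap s n).bind (kap t) :=
    (partrec₂_kap.comp (Computable.const s) Computable.id).bind
      (partrec₂_kap.comp (Computable.const t) Computable.snd).to₂
  exact exists_kap_eq (Partrec.nat_iff.1 h)

lemma exists_kap_singleton_const (r : ℕ) :
    ∃ e, ∃ c : ℕ → ℕ, ∀ n, kap e n = Part.some (ofL [c n]) ∧ ∀ b, kap (c n) b = kap r n := by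
  let c n := encode (Code.curry ((ofNat Code r).comp Code.left) n)
  have hc : Primrec fun n => ofL [c n] :=
    Primrec.encode.comp <| Primrec.list_cons.comp
      (Primrec.encode.comp <| Code.primrec₂_curry.comp (Primrec.const _) Primrec.id)
      (Primrec.const [])
  obtain ⟨e, he⟩ := exists_kap_eq (Partrec.nat_iff.1 hc.to_comp.partrec)
  refine ⟨e, c, fun n => ⟨he n, fun b => ?_⟩⟩
  simp [c, Code.eval_curry, Code.eval, kap]
  exact Part.bind_some _ _

-- The state is (codes still to run at `0`, entries collected so far).
def gatherStep (s : List ℕ × List ℕ) : Part (List ℕ × List ℕ) :=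
  (kap s.1.headI 0).map fun c => (s.1.tail, s.2 ++ toL c)

def gatherIter (s : List ℕ × List ℕ) : ℕ → Part (List ℕ × List ℕ)
  | 0 => Part.some s
  | n + 1 => (gatherIter s n).bind gatherStep

lemma partrec_gatherIter : Partrec₂ gatherIter := by
  have hnext : Primrec₂ fun (s : List ℕ × List ℕ) (c : ℕ) => (s.1.tail, s.2 ++ toL c) :=
    (Primrec.list_tail.comp (Primrec.fst.comp Primrec.fst)).pair
      (Primrec.list_append.comp (Primrec.snd.comp Primrec.fst) ((Primrec.ofNat _).comp Primrec.snd))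
  have hstep : Partrec gatherStep :=
    (partrec₂_kap.comp (Primrec.list_headI.comp Primrec.fst).to_comp (Computable.const 0)).map
      hnext.to_comp
  refine (Partrec.nat_rec Computable.snd (Partrec.some.comp Computable.fst)
    (hstep.comp (Computable.snd.comp Computable.snd)).to₂).of_eq fun p => ?_
  induction p.2 with
  | zero => rfl
  | succ _ ih => simp only [gatherIter, ← ih]

lemma exists_mem_gatherIter (l r acc : List ℕ) (hl : ∀ a ∈ l, (kap a 0).Dom) :
    ∃ acc', (r, acc') ∈ gatherIter (l ++ r, acc) l.length ∧
      ∀ z, z ∈ acc' ↔ z ∈ acc ∨ ∃ a ∈ l, ∃ c ∈ kap a 0, z ∈ toL c := by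
  induction l using List.reverseRecOn generalizing r with
  | nil => exact ⟨acc, Part.mem_some _, by simp⟩
  | append_singleton l a ih =>
    obtain ⟨acc₁, hacc₁, hmem₁⟩ := ih (a :: r) fun b hb => hl b (by simp [hb])
    obtain ⟨c, hc⟩ := Part.dom_iff_mem.1 (hl a (by simp))
    refine ⟨acc₁ ++ toL c, ?_, fun z => ?_⟩
    · simp only [List.append_assoc, List.singleton_append, List.length_append,
        List.length_singleton, gatherIter]
      exact Part.mem_bind hacc₁ (Part.mem_map _ hc)
    · simp only [List.mem_append, hmem₁, List.mem_singleton]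
      constructor
      · rintro ((h | ⟨b, hb, d, hd, hz⟩) | hz)
        exacts [.inl h, .inr ⟨b, .inl hb, d, hd, hz⟩, .inr ⟨a, .inr rfl, c, hc, hz⟩]
      · rintro (h | ⟨b, hb | rfl, d, hd, hz⟩)
        exacts [.inl (.inl h), .inl (.inr ⟨b, hb, d, hd, hz⟩), .inr (Part.mem_unique hd hc ▸ hz)]

lemma exists_kap_gather : ∃ g, ∀ v, (∀ a ∈ toL v, (kap a 0).Dom) →
    ∃ w ∈ kap g v, ∀ z, z ∈ toL w ↔ ∃ a ∈ toL v, ∃ c ∈ kap a 0, z ∈ toL c := by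
  have h : Partrec fun v => (gatherIter (toL v, []) (toL v).length).map fun s => ofL s.2 :=
    (partrec_gatherIter.comp ((Computable.ofNat _).pair (Computable.const []))
      (Computable.list_length.comp (Computable.ofNat _))).map
      (Primrec.encode.comp (Primrec.snd.comp Primrec.snd)).to_comp.to₂
  obtain ⟨g, hg⟩ := exists_kap_eq (Partrec.nat_iff.1 h)
  refine ⟨g, fun v hv => ?_⟩
  obtain ⟨acc, hacc, hmem⟩ := exists_mem_gatherIter (toL v) [] [] hv
  rw [List.append_nil] at hacc
  exact ⟨ofL acc, hg v ▸ Part.mem_map _ hacc, by simpa using hmem⟩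

end Kleene

lemma isSigma_upClo (A S : Set ℕ) : HPair.IsSigma ⟨upClo A S, A⟩ :=
  ⟨fun _ hm => hm.1, fun _ hm _ hn hmn => ⟨hn, hm.2.imp fun _ hk => ⟨hk.1, sle_trans hk.2 hmn⟩⟩⟩

@[simp] lemma ofL_singleton_mem_bang {a : ℕ} {A : Set ℕ} : ofL [a] ∈ bang A ↔ a ∈ A := by
  simp [bang]

section Adjunction

variable {X Y : Type} {f : X → Y} {φ : X → HPair} {χ : Y → HPair}

/-- The realizer sends `n` to `⟨λ b. r · n⟩`. -/
theorem hle_hforall_of_hle_comp (hφ : ∀ x, (φ x).act ⊆ bang (φ x).pot)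
    (h : hle (χ ∘ f) φ) : hle χ (hforall f φ) := by
  obtain ⟨r, hr⟩ := h
  obtain ⟨e, c, he⟩ := exists_kap_singleton_const r
  have kapIn_c : ∀ n b S, kapIn (c n) b S ↔ kapIn r n S := by
    intro n b S
    simp only [kapIn, (he n).2]
  have hpot : ∀ y n, (∀ x, f x = y → kapIn r n (bang (φ x).pot)) → c n ∈ hforallPot f φ y :=
    fun y n hn x hx b => (kapIn_c n b _).2 (hn x hx)
  refine ⟨e, fun y n => ⟨fun hn => ?_, fun hn => ?_⟩⟩
  · refine ⟨ofL [c n], (he n).1 ▸ Part.mem_some _, ofL_singleton_mem_bang.2 (hpot y n ?_)⟩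
    rintro x rfl
    exact (hr x n).1 hn
  · have hact : ∀ x, f x = y → kapIn r n (φ x).act := by
      rintro x rfl
      exact (hr x n).2 hn
    have hc := hpot y n fun x hx =>
      let ⟨v, hv, hvact⟩ := hact x hx
      ⟨v, hv, hφ x hvact⟩
    refine ⟨ofL [c n], (he n).1 ▸ Part.mem_some _, ofL_singleton_mem_bang.2 hc, ofL [c n],
      ⟨c n, rfl, hc, fun x hx b => (kapIn_c n b _).2 (hact x hx)⟩, sle_refl _⟩

/-- The realizer runs `a · 0` for every entry `a` of `s · n` and collects all resulting entries;
upward closure of `(φ x)₀` absorbs the entries coming from the other `a`. -/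
theorem hle_comp_of_hle_hforall (hφ : ∀ x, UpwardClosedIn (φ x).pot (φ x).act)
    (h : hle χ (hforall f φ)) : hle (χ ∘ f) φ := by
  obtain ⟨s, hs⟩ := h
  obtain ⟨g, hg⟩ := exists_kap_gather
  obtain ⟨e, he⟩ := exists_kap_eq_bind s g
  have hgather : ∀ x v, v ∈ bang (hforallPot f φ (f x)) →
      ∃ w ∈ kap g v, w ∈ bang (φ x).pot ∧ ∀ a ∈ toL v, ∀ c ∈ kap a 0, sle c w := by
    intro x v hv
    obtain ⟨w, hw, hmem⟩ := hg v fun a ha =>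
      let ⟨c, hc, _⟩ := hv a ha x rfl 0
      Part.dom_iff_mem.2 ⟨c, hc⟩
    refine ⟨w, hw, fun z hz => ?_, fun a ha c hc z hz => (hmem z).2 ⟨a, ha, c, hc, hz⟩⟩
    obtain ⟨a, ha, c, hc, hzc⟩ := (hmem z).1 hz
    obtain ⟨c', hc', hc'pot⟩ := hv a ha x rfl 0
    exact hc'pot z (Part.mem_unique hc' hc ▸ hzc)
  refine ⟨e, fun x n => ⟨fun hn => ?_, fun hn => ?_⟩⟩
  · obtain ⟨v, hv, hvpot⟩ := (hs (f x) n).1 hn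
    obtain ⟨w, hw, hwpot, -⟩ := hgather x v hvpot
    exact ⟨w, he n ▸ Part.mem_bind hv hw, hwpot⟩
  · obtain ⟨v, hv, hvpot, _, ⟨a, rfl, -, ha⟩, hav⟩ := (hs (f x) n).2 hn
    obtain ⟨w, hw, hwpot, hsub⟩ := hgather x v hvpot
    obtain ⟨c, hc, hcact⟩ := ha x rfl 0
    exact ⟨w, he n ▸ Part.mem_bind hv hw,
      hφ x c hcact w hwpot (hsub a (hav a (by simp)) c hc)⟩

end Adjunction

/-- `∀_f φ y` lands in `Σ` and `∀_f` is right adjoint to reindexing. -/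
theorem hforall_isSigma_and_adjoint {X Y : Type} (f : X → Y) (φ : X → HPair)
    (hφ : ∀ x, (φ x).IsSigma) :
    (∀ y, (hforall f φ y).IsSigma) ∧
    ∀ χ : Y → HPair, (∀ y, (χ y).IsSigma) →
      (hle (χ ∘ f) φ ↔ hle χ (hforall f φ)) :=
  ⟨fun _ => isSigma_upClo _ _, fun _ _ =>
    ⟨hle_hforall_of_hle_comp fun x => (hφ x).1, hle_comp_of_hle_hforall fun x => (hφ x).2⟩⟩

end Herbrand
end

section
/- Let e ∈ ℕ be a code of the total computable function with constant value ⟨⟩ (the code of the empty list). For every (A₀, A₁) ∈ Σ: A₀ is inhabited if and only if (¬¬(A₀, A₁))₀ is inhabited; moreover, if A₀ is inhabited then ⟨e⟩ ∈ (¬¬(A₀, A₁))₀. -/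
open CategoryTheory Encodable Denumerable

namespace Herbrand

/-! `(¬A)₀` is inhabited exactly when `A₀` is empty: an element of `A₀` would have to be sent
into `∅₀ = ∅`, while for empty `A₀` the realizer condition on `⟨e⟩` is vacuous. Applying
this twice gives both claims. -/

lemma ofL_nil_mem_bang (S : Set ℕ) : ofL [] ∈ bang S := by
  simp [bang]

lemma ofL_singleton_mem_bang_s5 {c : ℕ} {S : Set ℕ} (hc : c ∈ S) : ofL [c] ∈ bang S := by
  simpa [bang] using hc

lemma ofL_singleton_mem_impl_act {A B : HPair} {c : ℕ} (hc : c ∈ implPot A B)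
    (hreal : ∀ m ∈ A.act, kapIn c m B.act) : ofL [c] ∈ (impl A B).act :=
  ⟨ofL_singleton_mem_bang_s5 hc, ofL [c], ⟨c, rfl, hc, hreal⟩, sle_refl _⟩

/-- Since `!∅ = {⟨⟩}`, a code of the constant `⟨⟩` function is a potential realizer of
every negation. -/
lemma mem_implPot_bot_of_kap_eq_nil {e : ℕ} (he : ∀ n : ℕ, kap e n = Part.some (ofL []))
    (A : HPair) : e ∈ implPot A bot :=
  fun m _ => ⟨ofL [], by rw [he]; exact Part.mem_some _, ofL_nil_mem_bang _⟩

lemma neg_act_eq_empty {A : HPair} (hA : A.act.Nonempty) : (neg A).act = ∅ := by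
  obtain ⟨a, ha⟩ := hA
  refine Set.eq_empty_of_forall_notMem ?_
  rintro n ⟨-, -, ⟨c, rfl, -, hreal⟩, -⟩
  obtain ⟨v, -, hv⟩ := hreal a ha
  exact hv

lemma ofL_singleton_mem_neg_act {e : ℕ} (he : ∀ n : ℕ, kap e n = Part.some (ofL []))
    {A : HPair} (hA : A.act = ∅) : ofL [e] ∈ (neg A).act :=
  ofL_singleton_mem_impl_act (mem_implPot_bot_of_kap_eq_nil he A) (by simp [hA])

theorem doubleneg_act_nonempty_general (e : ℕ)
    (he : ∀ n : ℕ, kap e n = Part.some (ofL []))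
    (A : HPair) :
    (A.act.Nonempty ↔ (neg (neg A)).act.Nonempty) ∧
    (A.act.Nonempty → ofL [e] ∈ (neg (neg A)).act) := by
  have hmem (hA : A.act.Nonempty) : ofL [e] ∈ (neg (neg A)).act :=
    ofL_singleton_mem_neg_act he (neg_act_eq_empty hA)
  refine ⟨⟨fun hA => ⟨_, hmem hA⟩, fun hnn => ?_⟩, hmem⟩
  by_contra hA
  have hnA : (neg A).act.Nonempty :=
    ⟨_, ofL_singleton_mem_neg_act he (Set.not_nonempty_iff_eq_empty.mp hA)⟩
  exact hnn.ne_empty (neg_act_eq_empty hnA)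

/-- for `e` a code of the constant function with value `⟨⟩`, and any
`(A₀, A₁) ∈ Σ`: `A₀` is inhabited iff `(¬¬(A₀,A₁))₀` is inhabited, and if `A₀` is
inhabited then `⟨e⟩ ∈ (¬¬(A₀,A₁))₀`. -/
theorem doubleneg_act_nonempty (e : ℕ)
    (he : ∀ n : ℕ, kap e n = Part.some (ofL []))
    (A : HPair) (hA : A.IsSigma) :
    (A.act.Nonempty ↔ (neg (neg A)).act.Nonempty) ∧
    (A.act.Nonempty → ofL [e] ∈ (neg (neg A)).act) :=
  doubleneg_act_nonempty_general e he A

end Herbrand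
end

section
/- In the category HAsm of Herbrand assemblies over K₁: every morphism factors as a super epi followed by a monomorphism; every super epi is a regular epimorphism; and super epis are stable under pullback, i.e., the pullback of a super epi along any morphism is again a super epi. -/
open CategoryTheory Encodable Denumerable

namespace Herbrand

/-- A Herbrand assembly over `K₁`. -/
structure HAsmObj where
  carrier : Type
  real : Set ℕ
  rz : carrier → Set ℕ
  rz_sub : ∀ a, rz a ⊆ bang real
  rz_ne : ∀ a, (rz a).Nonempty
  rz_up : ∀ a, UpwardClosedIn real (rz a)

/-- `r ∈ ℕ` tracks the function `f` between the underlying sets of two Herbrand assemblies. -/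
def Tracks (B A : HAsmObj) (f : B.carrier → A.carrier) (r : ℕ) : Prop :=
  (∀ m ∈ bang B.real, kapIn r m (bang A.real)) ∧
  ∀ b : B.carrier, ∀ m ∈ B.rz b, kapIn r m (A.rz (f b))

/-- A morphism of Herbrand assemblies: a tracked function. -/
structure HHom (B A : HAsmObj) where
  toFun : B.carrier → A.carrier
  tracked : ∃ r, Tracks B A toFun r

theorem HHom.ext' {B A : HAsmObj} {f g : HHom B A} (h : f.toFun = g.toFun) : f = g := by
  cases f; cases g; simpa using h

theorem tracks_id_fun (B A : HAsmObj) (f : B.carrier → A.carrier)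
    (h1 : ∀ m ∈ bang B.real, m ∈ bang A.real)
    (h2 : ∀ b : B.carrier, ∀ m ∈ B.rz b, m ∈ A.rz (f b)) : ∃ r, Tracks B A f r := by
  obtain ⟨e, he⟩ := exists_kap_eq (Nat.Partrec.of_primrec Nat.Primrec.id)
  exact ⟨e, fun m hm => ⟨m, by simp [he], h1 m hm⟩,
    fun b m hm => ⟨m, by simp [he], h2 b m hm⟩⟩

theorem tracked_id (A : HAsmObj) : ∃ r, Tracks A A id r :=
  tracks_id_fun A A id (fun _ h => h) (fun _ _ h => h)

theorem tracked_comp {C B A : HAsmObj} {f : C.carrier → B.carrier} {g : B.carrier → A.carrier}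
    (hf : ∃ r, Tracks C B f r) (hg : ∃ s, Tracks B A g s) : ∃ t, Tracks C A (g ∘ f) t := by
  obtain ⟨r, hr1, hr2⟩ := hf
  obtain ⟨s, hs1, hs2⟩ := hg
  refine ⟨encode (Nat.Partrec.Code.comp (ofNat Nat.Partrec.Code s) (ofNat Nat.Partrec.Code r)),
    ?_, ?_⟩
  · intro m hm
    obtain ⟨v, hv, hv'⟩ := hr1 m hm
    obtain ⟨w, hw, hw'⟩ := hs1 v hv'
    exact ⟨w, by
      simp only [kap, Nat.Partrec.Code.eval, ofNat_encode]; exact Part.mem_bind_iff.mpr ⟨v, hv, hw⟩, hw'⟩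
  · intro c m hm
    obtain ⟨v, hv, hv'⟩ := hr2 c m hm
    obtain ⟨w, hw, hw'⟩ := hs2 (f c) v hv'
    exact ⟨w, by
      simp only [kap, Nat.Partrec.Code.eval, ofNat_encode]; exact Part.mem_bind_iff.mpr ⟨v, hv, hw⟩, hw'⟩

/-- The category `HAsm` of Herbrand assemblies over `K₁`. -/
instance : Category HAsmObj where
  Hom B A := HHom B A
  id A := ⟨id, tracked_id A⟩
  comp f g := ⟨g.toFun ∘ f.toFun, tracked_comp f.tracked g.tracked⟩
  id_comp f := HHom.ext' rfl
  comp_id f := HHom.ext' rfl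
  assoc f g h := HHom.ext' rfl


/-- The Herbrand assembly `∇X = (X, ℕ, x ↦ !ℕ)`. -/
def nablaObj (X : Type) : HAsmObj where
  carrier := X
  real := Set.univ
  rz _ := bang Set.univ
  rz_sub _ := fun _ h => h
  rz_ne _ := ⟨0, mem_bang_univ 0⟩
  rz_up _ := fun _ _ n hn _ => hn

/-- The functor `∇ : Set → HAsm`. -/
def Nabla : Type ⥤ HAsmObj where
  obj := nablaObj
  map f := ⟨f, tracks_id_fun _ _ f (fun _ h => h) (fun _ _ h => h)⟩
  map_id _ := HHom.ext' rfl
  map_comp _ _ := HHom.ext' rfl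

/-- The underlying-set functor `Γ : HAsm → Set`. -/
def Gamma : HAsmObj ⥤ Type where
  obj A := A.carrier
  map f := TypeCat.ofHom f.toFun

/-- The realizability structure of the natural numbers object: `ν n = ↑_{!ℕ} {⟨n⟩}`. -/
def nuN (n : ℕ) : Set ℕ := upClo Set.univ {ofL [n]}

/-- The natural numbers object `N = (ℕ, ℕ, ν)` of `HAsm`. -/
def NObj : HAsmObj where
  carrier := ℕ
  real := Set.univ
  rz := nuN
  rz_sub _ := fun _ hm => hm.1
  rz_ne n := ⟨ofL [n], mem_bang_univ _, ofL [n], rfl, sle_refl _⟩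
  rz_up _ := fun m hm k hk hmk => ⟨hk, hm.2.choose, hm.2.choose_spec.1,
    sle_trans hm.2.choose_spec.2 hmk⟩

/-- The terminal object `1 = ({*}, ℕ, * ↦ !ℕ)` of `HAsm`. -/
def oneObj : HAsmObj := nablaObj PUnit

/-- The zero morphism `0 : 1 ⟶ N`. -/
def zeroH : oneObj ⟶ NObj := by
  refine ⟨fun _ => (0 : ℕ), ?_⟩
  obtain ⟨e, he⟩ := exists_kap_eq (Nat.Partrec.of_primrec (Nat.Primrec.const (ofL [0])))
  exact ⟨e, fun m _ => ⟨ofL [0], by simp [he], mem_bang_univ _⟩,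
    fun b m _ => ⟨ofL [0], by simp [he], mem_bang_univ _, ofL [0], rfl, sle_refl _⟩⟩

/-- The successor morphism `s : N ⟶ N`. -/
def succH : NObj ⟶ NObj := by
  refine ⟨(Nat.succ : ℕ → ℕ), ?_⟩
  have hp : Primrec (fun m : ℕ => ofL ((toL m).map Nat.succ)) :=
    Primrec.encode.comp ((Primrec.ofNat (List ℕ)).list_map
      ((Primrec.succ.comp Primrec.snd).to₂))
  obtain ⟨e, he⟩ := exists_kap_eq (Nat.Partrec.of_primrec (Primrec.nat_iff.mp hp))
  refine ⟨e, fun m _ => ⟨ofL ((toL m).map Nat.succ), by simp [he], mem_bang_univ _⟩, ?_⟩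
  rintro (n : ℕ) m hm
  refine ⟨ofL ((toL m).map Nat.succ), by simp [he], mem_bang_univ _, ofL [n + 1], rfl, ?_⟩
  intro x hx
  have hn : n ∈ toL m := hm.2.choose_spec.2 n (by
    have : hm.2.choose = ofL [n] := hm.2.choose_spec.1
    rw [this]; simp)
  have hx' : x = n + 1 := by simpa using hx
  subst hx'
  simp only [toL_ofL, List.mem_map]
  exact ⟨n, hn, rfl⟩


/-- A super epi of Herbrand assemblies. -/
def SuperEpi {B A : HAsmObj} (f : B ⟶ A) : Prop :=
  ∃ r : ℕ, (∀ n ∈ bang A.real, kapIn r n (bang B.real)) ∧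
    ∀ a : A.carrier, ∀ n ∈ A.rz a, ∃ b : B.carrier, f.toFun b = a ∧ kapIn r n (B.rz b)

lemma kap_partrec_s9 (r : ℕ) : Nat.Partrec (kap r) :=
  Nat.Partrec.Code.exists_code.mpr ⟨ofNat Nat.Partrec.Code r, rfl⟩

lemma exists_mem_kap_of_primrec {g : ℕ → ℕ} (hg : Primrec g) : ∃ e, ∀ n, g n ∈ kap e n := by
  obtain ⟨e, he⟩ := exists_kap_eq (Nat.Partrec.of_primrec (Primrec.nat_iff.mp hg))
  exact ⟨e, fun n => by simp [he]⟩

lemma exists_kap_comp (r s : ℕ) : ∃ t, ∀ n, ∀ u ∈ kap r n, ∀ v ∈ kap s u, v ∈ kap t n :=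
  ⟨encode (Nat.Partrec.Code.comp (ofNat Nat.Partrec.Code s) (ofNat Nat.Partrec.Code r)),
    fun _ _ hu _ hv => by
      simp only [kap, Nat.Partrec.Code.eval, ofNat_encode]; exact Part.mem_bind hu hv⟩

lemma exists_kap_map {g : ℕ → ℕ → ℕ} (hg : Primrec₂ g) (s : ℕ) :
    ∃ t, ∀ n, ∀ v ∈ kap s n, g n v ∈ kap t n := by
  have hp : Partrec fun n => (kap s n).map (g n) :=
    (Partrec.nat_iff.mpr (kap_partrec_s9 s)).map hg.to_comp
  obtain ⟨t, ht⟩ := exists_kap_eq (Partrec.nat_iff.mp hp)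
  exact ⟨t, fun n v hv => by simpa [ht] using Part.mem_map (g n) hv⟩

def tagUnion (A : Bool → Set ℕ) : Set ℕ := {k | k.div2 ∈ A k.bodd}

lemma bit_mem_tagUnion {A : Bool → Set ℕ} {b : Bool} {x : ℕ} :
    Nat.bit b x ∈ tagUnion A ↔ x ∈ A b := by
  simp [tagUnion, Nat.bodd_bit, Nat.div2_bit]

def tagMerge (u v : ℕ) : ℕ := ofL ((toL u).map (Nat.bit false) ++ (toL v).map (Nat.bit true))

def untag (b : Bool) (n : ℕ) : ℕ :=
  ofL ((toL n).filterMap fun k => if k.bodd = b then some k.div2 else none)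

lemma mem_toL_untag {b : Bool} {n x : ℕ} : x ∈ toL (untag b n) ↔ Nat.bit b x ∈ toL n := by
  simp only [untag, toL_ofL, List.mem_filterMap, Option.ite_none_right_eq_some,
    Option.some.injEq]
  constructor
  · rintro ⟨k, hk, hb, rfl⟩
    rwa [← hb, Nat.bit_bodd_div2]
  · exact fun h => ⟨_, h, Nat.bodd_bit b x, Nat.div2_bit b x⟩

lemma untag_tagMerge (b : Bool) (u v : ℕ) : untag b (tagMerge u v) = bif b then v else u := by
  cases b <;> simp [untag, tagMerge, List.filterMap_append, List.filterMap_map, ofL_toL]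

lemma untag_mono (b : Bool) {m n : ℕ} (h : sle m n) : sle (untag b m) (untag b n) :=
  fun _ hx => mem_toL_untag.mpr (h _ (mem_toL_untag.mp hx))

lemma untag_mem_bang {A : Bool → Set ℕ} {n : ℕ} (hn : n ∈ bang (tagUnion A)) (b : Bool) :
    untag b n ∈ bang (A b) :=
  fun _ hx => bit_mem_tagUnion.mp (hn _ (mem_toL_untag.mp hx))

lemma tagMerge_mem_bang {A : Bool → Set ℕ} {u v : ℕ} (hu : u ∈ bang (A false))
    (hv : v ∈ bang (A true)) : tagMerge u v ∈ bang (tagUnion A) := by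
  intro k hk
  rw [tagMerge, toL_ofL, List.mem_append, List.mem_map, List.mem_map] at hk
  rcases hk with ⟨x, hx, rfl⟩ | ⟨x, hx, rfl⟩
  · exact bit_mem_tagUnion.mpr (hu x hx)
  · exact bit_mem_tagUnion.mpr (hv x hx)

lemma primrec_untag (b : Bool) : Primrec (untag b) :=
  Primrec.encode.comp <| Primrec.listFilterMap (Primrec.ofNat (List ℕ)) <|
    Primrec.ite (Primrec.eq.comp (Primrec.nat_bodd.comp Primrec.snd) (Primrec.const b))
      (Primrec.option_some.comp (Primrec.nat_div2.comp Primrec.snd)) (Primrec.const none)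

lemma primrec₂_tagMerge : Primrec₂ tagMerge := by
  have hbit : ∀ b, Primrec (Nat.bit b) := by
    rintro (_ | _)
    · simpa only [Nat.bit_false] using Primrec.nat_double
    · simpa only [Nat.bit_true] using Primrec.nat_double_succ
  exact (Primrec.encode.comp (Primrec.list_append.comp
    (((Primrec.ofNat (List ℕ)).comp Primrec.fst).list_map ((hbit false).comp Primrec.snd).to₂)
    (((Primrec.ofNat (List ℕ)).comp Primrec.snd).list_map ((hbit true).comp Primrec.snd).to₂))).to₂

lemma HAsmObj.rz_inter_nonempty (A : HAsmObj) (a a' : A.carrier) :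
    (A.rz a ∩ A.rz a').Nonempty := by
  obtain ⟨m, hm⟩ := A.rz_ne a
  obtain ⟨m', hm'⟩ := A.rz_ne a'
  have hmerge : ofL (toL m ++ toL m') ∈ bang A.real := by
    intro x hx
    rw [toL_ofL, List.mem_append] at hx
    exact hx.elim (A.rz_sub a hm x) (A.rz_sub a' hm' x)
  refine ⟨_, A.rz_up a m hm _ hmerge fun x hx => ?_, A.rz_up a' m' hm' _ hmerge fun x hx => ?_⟩
  · rw [toL_ofL]; exact List.mem_append_left _ hx
  · rw [toL_ofL]; exact List.mem_append_right _ hx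

lemma mono_of_injective {B A : HAsmObj} (f : B ⟶ A) (hf : Function.Injective f.toFun) : Mono f :=
  ⟨fun _ _ h => HHom.ext' (funext fun z => hf (congrArg (·.toFun z) h))⟩

section Image

variable {B A : HAsmObj} (f : B ⟶ A)

def imageObj : HAsmObj where
  carrier := Set.range f.toFun
  real := B.real
  rz a := {n | ∃ b, f.toFun b = a ∧ n ∈ B.rz b}
  rz_sub _ _ := fun ⟨b, _, hn⟩ => B.rz_sub b hn
  rz_ne a := by
    obtain ⟨b, hb⟩ := a.2
    obtain ⟨n, hn⟩ := B.rz_ne b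
    exact ⟨n, b, hb, hn⟩
  rz_up _ _ := fun ⟨b, hb, hm⟩ n hn hle => ⟨b, hb, B.rz_up b _ hm n hn hle⟩

def toImageObj : B ⟶ imageObj f :=
  ⟨Set.rangeFactorization f.toFun,
    tracks_id_fun _ _ _ (fun _ h => h) fun b _ hm => ⟨b, rfl, hm⟩⟩

def imageObjι : imageObj f ⟶ A where
  toFun := Subtype.val
  tracked := by
    obtain ⟨r, hr_real, hr_rz⟩ := f.tracked
    exact ⟨r, hr_real, fun _ m ⟨b, hb, hm⟩ => hb ▸ hr_rz b m hm⟩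

lemma superEpi_toImageObj : SuperEpi (toImageObj f) := by
  obtain ⟨e, he⟩ := exists_mem_kap_of_primrec Primrec.id
  exact ⟨e, fun n hn => ⟨n, he n, hn⟩, fun a n ⟨b, hb, hn⟩ => ⟨b, Subtype.ext hb, n, he n, hn⟩⟩

lemma mono_imageObjι : Mono (imageObjι f) :=
  mono_of_injective _ Subtype.val_injective

lemma toImageObj_comp_imageObjι : toImageObj f ≫ imageObjι f = f :=
  HHom.ext' rfl

end Image

section KernelPair

variable {B A : HAsmObj} (f : B ⟶ A)

def kernelPairObj : HAsmObj where
  carrier := {p : B.carrier × B.carrier // f.toFun p.1 = f.toFun p.2}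
  real := B.real
  rz p := B.rz p.1.1 ∩ B.rz p.1.2
  rz_sub _ := Set.inter_subset_left.trans (B.rz_sub _)
  rz_ne p := B.rz_inter_nonempty p.1.1 p.1.2
  rz_up _ m hm n hn hle := ⟨B.rz_up _ m hm.1 n hn hle, B.rz_up _ m hm.2 n hn hle⟩

def kernelPairObj.fst : kernelPairObj f ⟶ B :=
  ⟨fun p => p.1.1, tracks_id_fun _ _ _ (fun _ h => h) fun _ _ hm => hm.1⟩

def kernelPairObj.snd : kernelPairObj f ⟶ B :=
  ⟨fun p => p.1.2, tracks_id_fun _ _ _ (fun _ h => h) fun _ _ hm => hm.2⟩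

lemma kernelPairObj.condition : kernelPairObj.fst f ≫ f = kernelPairObj.snd f ≫ f :=
  HHom.ext' (funext fun p => p.2)

end KernelPair

namespace SuperEpi

open Limits

variable {B A C : HAsmObj} {f : B ⟶ A}

lemma surjective (hf : SuperEpi f) : Function.Surjective f.toFun := by
  obtain ⟨r, -, hr⟩ := hf
  intro a
  obtain ⟨n, hn⟩ := A.rz_ne a
  obtain ⟨b, hb, -⟩ := hr a n hn
  exact ⟨b, hb⟩

lemma epi (hf : SuperEpi f) : Epi f :=
  ⟨fun _ _ h => HHom.ext' (hf.surjective.injective_comp_right (congrArg HHom.toFun h))⟩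

noncomputable def desc (hf : SuperEpi f) (g : B ⟶ C)
    (hg : ∀ b b', f.toFun b = f.toFun b' → g.toFun b = g.toFun b') : A ⟶ C where
  toFun := g.toFun ∘ Function.surjInv hf.surjective
  tracked := by
    obtain ⟨r, hr_real, hr_rz⟩ := hf
    obtain ⟨s, hs_real, hs_rz⟩ := g.tracked
    obtain ⟨t, ht⟩ := exists_kap_comp r s
    refine ⟨t, fun n hn => ?_, fun a n hn => ?_⟩
    · obtain ⟨u, hu, hu_real⟩ := hr_real n hn
      obtain ⟨v, hv, hv_real⟩ := hs_real u hu_real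
      exact ⟨v, ht n u hu v hv, hv_real⟩
    · obtain ⟨b, rfl, u, hu, hu_rz⟩ := hr_rz a n hn
      obtain ⟨v, hv, hv_rz⟩ := hs_rz b u hu_rz
      refine ⟨v, ht n u hu v hv, ?_⟩
      rwa [Function.comp_apply, hg _ b (Function.surjInv_eq _ _)]

lemma fac_desc (hf : SuperEpi f) (g : B ⟶ C)
    (hg : ∀ b b', f.toFun b = f.toFun b' → g.toFun b = g.toFun b') : f ≫ hf.desc g hg = g :=
  HHom.ext' (funext fun b => hg _ b (Function.surjInv_eq hf.surjective _))

noncomputable def regularEpi (hf : SuperEpi f) : RegularEpi f where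
  W := kernelPairObj f
  left := kernelPairObj.fst f
  right := kernelPairObj.snd f
  w := kernelPairObj.condition f
  isColimit := Cofork.IsColimit.mk' _ fun s =>
    have hs : ∀ b b', f.toFun b = f.toFun b' → s.π.toFun b = s.π.toFun b' :=
      fun b b' h => congrArg (·.toFun ⟨(b, b'), h⟩) s.condition
    ⟨hf.desc s.π hs, hf.fac_desc s.π hs,
      fun hm => have := hf.epi; (cancel_epi f).mp (hm.trans (hf.fac_desc s.π hs).symm)⟩

end SuperEpi

section Pullback

variable {X Y Z : HAsmObj} (f : X ⟶ Z) (g : Y ⟶ Z)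

def pullbackReal (X Y : HAsmObj) (b : Bool) : Set ℕ := bif b then Y.real else X.real

def pullbackObj : HAsmObj where
  carrier := {p : X.carrier × Y.carrier // f.toFun p.1 = g.toFun p.2}
  real := tagUnion (pullbackReal X Y)
  rz p := {n | n ∈ bang (tagUnion (pullbackReal X Y)) ∧
    untag false n ∈ X.rz p.1.1 ∧ untag true n ∈ Y.rz p.1.2}
  rz_sub _ _ hn := hn.1
  rz_ne p := by
    obtain ⟨m, hm⟩ := X.rz_ne p.1.1
    obtain ⟨m', hm'⟩ := Y.rz_ne p.1.2
    refine ⟨tagMerge m m', tagMerge_mem_bang (X.rz_sub _ hm) (Y.rz_sub _ hm'), ?_, ?_⟩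
    · rwa [untag_tagMerge]
    · rwa [untag_tagMerge]
  rz_up _ m hm n hn hle :=
    ⟨hn, X.rz_up _ _ hm.2.1 _ (untag_mem_bang hn false) (untag_mono false hle),
      Y.rz_up _ _ hm.2.2 _ (untag_mem_bang hn true) (untag_mono true hle)⟩

def pullbackObj.fst : pullbackObj f g ⟶ X where
  toFun p := p.1.1
  tracked := by
    obtain ⟨e, he⟩ := exists_mem_kap_of_primrec (primrec_untag false)
    exact ⟨e, fun n hn => ⟨_, he n, untag_mem_bang (A := pullbackReal X Y) hn false⟩,
      fun _ n hn => ⟨_, he n, hn.2.1⟩⟩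

def pullbackObj.snd : pullbackObj f g ⟶ Y where
  toFun p := p.1.2
  tracked := by
    obtain ⟨e, he⟩ := exists_mem_kap_of_primrec (primrec_untag true)
    exact ⟨e, fun n hn => ⟨_, he n, untag_mem_bang (A := pullbackReal X Y) hn true⟩,
      fun _ n hn => ⟨_, he n, hn.2.2⟩⟩

lemma pullbackObj.condition : pullbackObj.fst f g ≫ f = pullbackObj.snd f g ≫ g :=
  HHom.ext' (funext fun p => p.2)

variable {f g}

lemma tagMerge_mem_rz_pullbackObj {x : X.carrier} {y : Y.carrier} (h : f.toFun x = g.toFun y)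
    {u v : ℕ} (hu : u ∈ X.rz x) (hv : v ∈ Y.rz y) :
    tagMerge u v ∈ (pullbackObj f g).rz ⟨(x, y), h⟩ := by
  refine ⟨tagMerge_mem_bang (X.rz_sub _ hu) (Y.rz_sub _ hv), ?_, ?_⟩
  · rwa [untag_tagMerge]
  · rwa [untag_tagMerge]

end Pullback

lemma SuperEpi.of_isPullback {P X Y Z : HAsmObj} {fst : P ⟶ X} {snd : P ⟶ Y} {f : X ⟶ Z}
    {g : Y ⟶ Z} (sq : IsPullback fst snd f g) (hg : SuperEpi g) : SuperEpi fst := by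
  obtain ⟨r, hr_real, hr_rz⟩ := hg
  obtain ⟨s, hs_real, hs_rz⟩ := f.tracked
  let l := sq.lift (pullbackObj.fst f g) (pullbackObj.snd f g) (pullbackObj.condition f g)
  obtain ⟨t, ht_real, ht_rz⟩ := l.tracked
  obtain ⟨c, hc⟩ := exists_kap_comp s r
  obtain ⟨d, hd⟩ := exists_kap_map primrec₂_tagMerge c
  obtain ⟨ρ, hρ⟩ := exists_kap_comp d t
  refine ⟨ρ, fun n hn => ?_, fun x n hn => ?_⟩
  · obtain ⟨u, hu, hu_real⟩ := hs_real n hn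
    obtain ⟨v, hv, hv_real⟩ := hr_real u hu_real
    obtain ⟨w, hw, hw_real⟩ := ht_real _ (tagMerge_mem_bang (A := pullbackReal X Y) hn hv_real)
    exact ⟨w, hρ n _ (hd n v (hc n u hu v hv)) w hw, hw_real⟩
  · obtain ⟨u, hu, hu_rz⟩ := hs_rz x n hn
    obtain ⟨y, hy, v, hv, hv_rz⟩ := hr_rz _ u hu_rz
    let q : (pullbackObj f g).carrier := ⟨(x, y), hy.symm⟩
    obtain ⟨w, hw, hw_rz⟩ := ht_rz q _ (tagMerge_mem_rz_pullbackObj hy.symm hn hv_rz)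
    exact ⟨l.toFun q, congrArg (·.toFun q) (sq.lift_fst _ _ _), w,
      hρ n _ (hd n v (hc n u hu v hv)) w hw, hw_rz⟩

open CategoryTheory.Limits in
/-- every morphism factors as a super epi followed by a mono; super epis are
regular epis; and super epis are stable under pullback. -/
theorem superEpi_facts :
    (∀ {B A : HAsmObj} (f : B ⟶ A),
      ∃ (C : HAsmObj) (g : B ⟶ C) (h : C ⟶ A), SuperEpi g ∧ Mono h ∧ g ≫ h = f) ∧
    (∀ {B A : HAsmObj} (f : B ⟶ A), SuperEpi f → Nonempty (RegularEpi f)) ∧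
    (∀ {P X Y Z : HAsmObj} (fst : P ⟶ X) (snd : P ⟶ Y) (f : X ⟶ Z) (g : Y ⟶ Z),
      IsPullback fst snd f g → SuperEpi g → SuperEpi fst) := by
  refine ⟨fun f => ?_, fun _ hf => ⟨hf.regularEpi⟩, fun _ _ _ _ sq hg => hg.of_isPullback sq⟩
  exact ⟨imageObj f, toImageObj f, imageObjι f, superEpi_toImageObj f, mono_imageObjι f,
    toImageObj_comp_imageObjι f⟩

end Herbrand
end
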